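/- arXiv:2102.05113 — 4 statements merged into one kernel-verified Lean document; each statement's English description precedes it below -/
import Mathlib

section
/- Let μ be a σ-finite measure on a measurable space X, let p, q, p̄ : X → [0,∞) be measurable probability densities with respect to μ, suppose p(x)·p̄(x) = 0 for μ-almost every x, and suppose p(x) = 0 for μ-almost every x with q(x) = 0. Let f : [0,∞) → ℝ be convex with f(1) = 0 and f(0) finite, and let λ ∈ (0,1]. If the function x ↦ (λ q(x) + (1−λ) p̄(x)) · f( p(x) / (λ q(x) + (1−λ) p̄(x)) ) is μ-integrable (with the convention that the integrand equals 0 whenever the mixture density vanishes), then D_f(p ‖ λq + (1−λ)p̄) := ∫ (λ q(x) + (1−λ) p̄(x)) · f( p(x) / (λ q(x) + (1−λ) p̄(x)) ) dμ(x) ≥ λ f(1/λ) + (1−λ) f(0). -/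
open MeasureTheory

/-- Supporting line for a convex function on `[0, ∞)` at an interior point. -/
lemma exists_supporting_line {f : ℝ → ℝ} (hf : ConvexOn ℝ (Set.Ici 0) f)
    {m : ℝ} (hm : 0 < m) : ∃ c : ℝ, ∀ y, 0 ≤ y → f m + c * (y - m) ≤ f y := by
  set S : Set ℝ := (fun y => (f m - f y) / (m - y)) '' Set.Ico 0 m with hS
  have hne : S.Nonempty := ⟨_, ⟨0, ⟨le_refl _, hm⟩, rfl⟩⟩
  have hbdd : BddAbove S := by
    refine ⟨(f (m + 1) - f m) / (m + 1 - m), ?_⟩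
    rintro _ ⟨y, ⟨hy0, hym⟩, rfl⟩
    exact hf.slope_mono_adjacent hy0 (Set.mem_Ici.mpr (by linarith)) hym (lt_add_one m)
  refine ⟨sSup S, fun y hy0 => ?_⟩
  rcases lt_trichotomy y m with h | h | h
  · have hle : (f m - f y) / (m - y) ≤ sSup S := le_csSup hbdd ⟨y, ⟨hy0, h⟩, rfl⟩
    have hpos : 0 < m - y := by linarith
    rw [div_le_iff₀ hpos] at hle
    nlinarith
  · subst h; simp
  · have hle : sSup S ≤ (f y - f m) / (y - m) := by
      refine csSup_le hne ?_
      rintro _ ⟨z, ⟨hz0, hzm⟩, rfl⟩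
      exact hf.slope_mono_adjacent hz0 hy0 hzm h
    have hpos : 0 < y - m := by linarith
    rw [le_div_iff₀ hpos] at hle
    nlinarith

/-- For probability densities `p, q, pbar` w.r.t. a σ-finite measure `μ`,
with `p ⊥ pbar` (disjoint supports) and `p ≪ q`, a convex `f : [0,∞) → ℝ` with `f 1 = 0`,
and `λ ∈ (0,1]`: if the `f`-divergence integrand of `p` against `λ q + (1-λ) pbar` is
integrable, then `D_f(p ‖ λq + (1-λ)pbar) ≥ λ f(1/λ) + (1-λ) f 0`.  (In Lean, division by
zero yields `0`, so the integrand is automatically `0` whenever the mixture density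
vanishes.) -/
theorem stmt_2 {X : Type*} [MeasurableSpace X] (μ : Measure X) [SigmaFinite μ]
    (p q pbar : X → ℝ)
    (hpm : Measurable p) (hqm : Measurable q) (hpbarm : Measurable pbar)
    (hp0 : ∀ x, 0 ≤ p x) (hq0 : ∀ x, 0 ≤ q x) (hpbar0 : ∀ x, 0 ≤ pbar x)
    (hp1 : ∫ x, p x ∂μ = 1) (hq1 : ∫ x, q x ∂μ = 1) (hpbar1 : ∫ x, pbar x ∂μ = 1)
    (hdisj : ∀ᵐ x ∂μ, p x * pbar x = 0)
    (habs : ∀ᵐ x ∂μ, q x = 0 → p x = 0)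
    (f : ℝ → ℝ) (hf : ConvexOn ℝ (Set.Ici 0) f) (hf1 : f 1 = 0)
    (lam : ℝ) (hlam : lam ∈ Set.Ioc (0 : ℝ) 1)
    (hint : Integrable (fun x =>
      (lam * q x + (1 - lam) * pbar x) * f (p x / (lam * q x + (1 - lam) * pbar x))) μ) :
    ∫ x, (lam * q x + (1 - lam) * pbar x) * f (p x / (lam * q x + (1 - lam) * pbar x)) ∂μ
      ≥ lam * f (1 / lam) + (1 - lam) * f 0 := by
  obtain ⟨hlam0, hlam1⟩ := hlam
  -- integrability of the densities
  have hpint : Integrable p μ := by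
    by_contra h; rw [integral_undef h] at hp1; norm_num at hp1
  have hqint : Integrable q μ := by
    by_contra h; rw [integral_undef h] at hq1; norm_num at hq1
  have hpbarint : Integrable pbar μ := by
    by_contra h; rw [integral_undef h] at hpbar1; norm_num at hpbar1
  set r : X → ℝ := fun x => lam * q x + (1 - lam) * pbar x with hr_def
  have hrint : Integrable r μ := (hqint.const_mul lam).add (hpbarint.const_mul (1 - lam))
  have hr0 : ∀ x, 0 ≤ r x := fun x => by
    have := hq0 x; have := hpbar0 x; simp only [hr_def]; nlinarith
  -- the set where pbar vanishes
  set A : Set X := pbar ⁻¹' {0} with hA_def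
  have hA : MeasurableSet A := hpbarm (measurableSet_singleton 0)
  have hmemA : ∀ x, x ∈ A ↔ pbar x = 0 := fun x => Iff.rfl
  -- integrals over A and its complement
  have hpbarA : ∫ x in A, pbar x ∂μ = 0 :=
    setIntegral_eq_zero_of_forall_eq_zero fun x hx => hx
  have hpbarAc : ∫ x in Aᶜ, pbar x ∂μ = 1 := by
    have := integral_add_compl hA hpbarint
    rw [hpbarA, zero_add] at this; rw [this, hpbar1]
  have hpAc : ∫ x in Aᶜ, p x ∂μ = 0 := by
    refine setIntegral_eq_zero_of_ae_eq_zero ?_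
    filter_upwards [hdisj] with x hx hxA
    have hpb : pbar x ≠ 0 := fun h => hxA h
    rcases mul_eq_zero.mp hx with h | h
    · exact h
    · exact absurd h hpb
  have hpA : ∫ x in A, p x ∂μ = 1 := by
    have := integral_add_compl hA hpint
    rw [hpAc, add_zero] at this; rw [this, hp1]
  set a : ℝ := ∫ x in A, q x ∂μ with ha_def
  have ha0 : 0 ≤ a := setIntegral_nonneg hA fun x _ => hq0 x
  have ha1 : a ≤ 1 := by
    have := setIntegral_le_integral (μ := μ) (s := A) hqint (Filter.Eventually.of_forall hq0)
    rw [hq1] at this; exact this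
  have hapos : 0 < a := by
    rcases lt_or_eq_of_le ha0 with h | h
    · exact h
    · exfalso
      have hq_ae : q =ᵐ[μ.restrict A] 0 := by
        rw [← setIntegral_eq_zero_iff_of_nonneg_ae
          (Filter.Eventually.of_forall fun x => hq0 x) (hqint.restrict)]
        exact h.symm
      have hp_ae : p =ᵐ[μ.restrict A] 0 := by
        filter_upwards [hq_ae, ae_restrict_of_ae habs] with x h1 h2
        exact h2 h1
      have : ∫ x in A, p x ∂μ = 0 := by
        rw [integral_congr_ae hp_ae]; simp
      rw [hpA] at this; norm_num at this
  -- the supporting line at m = 1 / (lam * a)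
  set m : ℝ := 1 / (lam * a) with hm_def
  have hmpos : 0 < m := by positivity
  obtain ⟨c, hc⟩ := exists_supporting_line hf hmpos
  -- the lower-bounding function
  set g1 : X → ℝ := fun x => f m * r x + c * (p x - m * r x) with hg1_def
  set g2 : X → ℝ := fun x => f 0 * r x with hg2_def
  set g : X → ℝ := fun x => A.indicator g1 x + Aᶜ.indicator g2 x with hg_def
  have hint_sub : Integrable (fun x => p x - m * r x) μ := hpint.sub (hrint.const_mul m)
  have hint_c : Integrable (fun x => c * (p x - m * r x)) μ := hint_sub.const_mul c
  have hg1int : Integrable g1 μ := (hrint.const_mul (f m)).add hint_c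
  have hg2int : Integrable g2 μ := hrint.const_mul (f 0)
  have hgint : Integrable g μ :=
    (hg1int.indicator hA).add (hg2int.indicator hA.compl)
  -- pointwise a.e. bound
  have hle : g ≤ᵐ[μ] fun x => r x * f (p x / r x) := by
    filter_upwards [hdisj, habs] with x hxdisj hxabs
    by_cases hxA : x ∈ A
    · have hpb0 : pbar x = 0 := hxA
      rw [hg_def]
      simp only [Set.indicator_of_mem hxA, Set.indicator_of_notMem (by simp [hxA] :
        x ∉ Aᶜ)]
      rcases eq_or_lt_of_le (hr0 x) with hr | hr
      · have hq : q x = 0 := by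
          have : lam * q x + (1 - lam) * pbar x = 0 := hr.symm
          rw [hpb0, mul_zero, add_zero] at this
          exact (mul_eq_zero.mp this).resolve_left (ne_of_gt hlam0)
        have hp : p x = 0 := hxabs hq
        simp [g1, ← hr, hp]
      · have key := hc (p x / r x) (div_nonneg (hp0 x) (hr0 x))
        have h2 : r x * (f m + c * (p x / r x - m)) ≤ r x * f (p x / r x) :=
          mul_le_mul_of_nonneg_left key (le_of_lt hr)
        have hrne : r x ≠ 0 := ne_of_gt hr
        have h4 : ∀ R P : ℝ, R ≠ 0 → R * (f m + c * (P / R - m)) = f m * R + c * (P - m * R) := by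
          intro R P hR
          have hk : P / R * R = P := div_mul_cancel₀ P hR
          linear_combination c * hk
        rw [add_zero]
        show f m * r x + c * (p x - m * r x) ≤ r x * f (p x / r x)
        rw [← h4 (r x) (p x) hrne]; exact h2
    · have hpb : pbar x ≠ 0 := hxA
      have hp : p x = 0 := (mul_eq_zero.mp hxdisj).resolve_right hpb
      rw [hg_def]
      simp only [Set.indicator_of_notMem hxA, Set.indicator_of_mem
        (Set.mem_compl hxA)]
      rcases eq_or_lt_of_le (hr0 x) with hr | hr
      · simp [g2, ← hr]
      · rw [hp, zero_div]
        simp [g2, mul_comm]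
    -- end pointwise
  have hmain : ∫ x, g x ∂μ ≤ ∫ x, r x * f (p x / r x) ∂μ :=
    integral_mono_ae hgint hint hle
  -- compute ∫ g
  have hrA : ∫ x in A, r x ∂μ = lam * a := by
    rw [hr_def]
    rw [integral_add ((hqint.const_mul lam).restrict) ((hpbarint.const_mul (1 - lam)).restrict),
      integral_const_mul, integral_const_mul, hpbarA, ← ha_def]
    ring
  have hrAc : ∫ x in Aᶜ, r x ∂μ = lam * (1 - a) + (1 - lam) := by
    have hqAc : ∫ x in Aᶜ, q x ∂μ = 1 - a := by
      have := integral_add_compl hA hqint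
      rw [hq1, ← ha_def] at this; linarith
    rw [hr_def]
    rw [integral_add ((hqint.const_mul lam).restrict) ((hpbarint.const_mul (1 - lam)).restrict),
      integral_const_mul, integral_const_mul, hqAc, hpbarAc]
    ring
  have hg1A : ∫ x in A, g1 x ∂μ = f m * (lam * a) + c * (1 - m * (lam * a)) := by
    simp only [hg1_def]
    rw [integral_add ((hrint.const_mul (f m)).restrict) (hint_c.restrict),
      integral_const_mul, integral_const_mul,
      integral_sub (hpint.restrict) ((hrint.const_mul m).restrict),
      integral_const_mul, hrA, hpA]
  have hg2Ac : ∫ x in Aᶜ, g2 x ∂μ = f 0 * (lam * (1 - a) + (1 - lam)) := by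
    rw [hg2_def, integral_const_mul, hrAc]
  have hgval : ∫ x, g x ∂μ = lam * a * f m + (lam * (1 - a) + (1 - lam)) * f 0 := by
    rw [hg_def]
    rw [integral_add (hg1int.indicator hA) (hg2int.indicator hA.compl),
      integral_indicator hA, integral_indicator hA.compl, hg1A, hg2Ac]
    have hma : m * (lam * a) = 1 := by
      rw [hm_def]; field_simp
    rw [hma]; ring
  -- convexity step
  have hconv : f (1 / lam) ≤ a * f m + (1 - a) * f 0 := by
    have h := hf.2 (Set.mem_Ici.mpr (le_of_lt hmpos)) (Set.mem_Ici.mpr (le_refl 0))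
      ha0 (by linarith : (0:ℝ) ≤ 1 - a) (by ring)
    have ham : a • m + (1 - a) • (0:ℝ) = 1 / lam := by
      have ha' : a ≠ 0 := ne_of_gt hapos
      have hl' : lam ≠ 0 := ne_of_gt hlam0
      simp only [smul_eq_mul, mul_zero, add_zero, hm_def]
      field_simp
      try ring
    rw [ham] at h
    simpa [smul_eq_mul] using h
  have hfinal : lam * f (1 / lam) + (1 - lam) * f 0 ≤ ∫ x, g x ∂μ := by
    rw [hgval]
    have := mul_le_mul_of_nonneg_left hconv (le_of_lt hlam0)
    nlinarith
  exact le_trans hfinal hmain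
end

section
/- Let μ be a σ-finite measure on a measurable space X, let p, q, p̄ : X → [0,∞) be measurable probability densities with respect to μ, suppose p(x)·p̄(x) = 0 for μ-almost every x, and suppose p(x) = 0 for μ-almost every x with q(x) = 0. Let f : [0,∞) → ℝ be convex with f(1) = 0 and f(0) finite, and let λ ∈ (0,1]. If the relevant integrands are μ-integrable, then D_f(p ‖ λq + (1−λ)p̄) ≥ D_f(p ‖ λp + (1−λ)p̄); that is, among mixtures λ·Q + (1−λ)·P̄ the f-divergence from P is minimized by taking Q = P. -/
open MeasureTheory


/-- A convex function on `[0,∞)` has a supporting line at any interior point. -/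
lemma exists_subgradient_aux {f : ℝ → ℝ} (hf : ConvexOn ℝ (Set.Ici 0) f)
    {m : ℝ} (hm : 0 < m) :
    ∃ c : ℝ, ∀ t ∈ Set.Ici (0 : ℝ), f m + c * (t - m) ≤ f t := by
  set S : Set ℝ := (fun t => (f m - f t) / (m - t)) '' Set.Ico 0 m with hS
  have hne : S.Nonempty := ⟨_, ⟨0, ⟨le_refl 0, hm⟩, rfl⟩⟩
  have hub : ∀ u ∈ Set.Ico (0:ℝ) m,
      (f m - f u) / (m - u) ≤ (f (m + 1) - f m) / (m + 1 - m) := by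
    intro u hu
    exact hf.slope_mono_adjacent hu.1 (Set.mem_Ici.mpr (by linarith)) hu.2 (by linarith)
  have hbdd : BddAbove S := by
    refine ⟨(f (m + 1) - f m) / (m + 1 - m), ?_⟩
    rintro _ ⟨u, hu, rfl⟩
    exact hub u hu
  refine ⟨sSup S, fun t ht => ?_⟩
  rcases lt_trichotomy t m with h | h | h
  · have hle : (f m - f t) / (m - t) ≤ sSup S :=
      le_csSup hbdd ⟨t, ⟨ht, h⟩, rfl⟩
    have hmt : 0 < m - t := by linarith
    rw [div_le_iff₀ hmt] at hle
    nlinarith [hle]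
  · subst h; simp
  · have hge : sSup S ≤ (f t - f m) / (t - m) := by
      apply csSup_le hne
      rintro _ ⟨u, hu, rfl⟩
      exact hf.slope_mono_adjacent hu.1 (le_of_lt (lt_trans hm h)) hu.2 h
    have hmt : 0 < t - m := by linarith
    rw [le_div_iff₀ hmt] at hge
    nlinarith [hge]


/-- For probability densities `p, q, pbar` w.r.t. a σ-finite measure `μ`,
with `p ⊥ pbar` (disjoint supports) and `p ≪ q`, a convex `f : [0,∞) → ℝ` with `f 1 = 0`,
and `λ ∈ (0,1]`: if the relevant `f`-divergence integrands are integrable, then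
`D_f(p ‖ λq + (1-λ)pbar) ≥ D_f(p ‖ λp + (1-λ)pbar)`, i.e. among mixtures the
`f`-divergence from `p` is minimized at `q = p`.  (In Lean, division by zero yields `0`,
so the integrands are automatically `0` whenever the mixture density vanishes.) -/
theorem stmt_4 {X : Type*} [MeasurableSpace X] (μ : Measure X) [SigmaFinite μ]
    (p q pbar : X → ℝ)
    (hpm : Measurable p) (hqm : Measurable q) (hpbarm : Measurable pbar)
    (hp0 : ∀ x, 0 ≤ p x) (hq0 : ∀ x, 0 ≤ q x) (hpbar0 : ∀ x, 0 ≤ pbar x)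
    (hp1 : ∫ x, p x ∂μ = 1) (hq1 : ∫ x, q x ∂μ = 1) (hpbar1 : ∫ x, pbar x ∂μ = 1)
    (hdisj : ∀ᵐ x ∂μ, p x * pbar x = 0)
    (habs : ∀ᵐ x ∂μ, q x = 0 → p x = 0)
    (f : ℝ → ℝ) (hf : ConvexOn ℝ (Set.Ici 0) f) (hf1 : f 1 = 0)
    (lam : ℝ) (hlam : lam ∈ Set.Ioc (0 : ℝ) 1)
    (hintq : Integrable (fun x =>
      (lam * q x + (1 - lam) * pbar x) * f (p x / (lam * q x + (1 - lam) * pbar x))) μ)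
    (hintp : Integrable (fun x =>
      (lam * p x + (1 - lam) * pbar x) * f (p x / (lam * p x + (1 - lam) * pbar x))) μ) :
    ∫ x, (lam * q x + (1 - lam) * pbar x) * f (p x / (lam * q x + (1 - lam) * pbar x)) ∂μ
      ≥ ∫ x, (lam * p x + (1 - lam) * pbar x) *
          f (p x / (lam * p x + (1 - lam) * pbar x)) ∂μ := by
  obtain ⟨hL0, hL1⟩ := hlam
  have hLne : lam ≠ 0 := ne_of_gt hL0
  have hpint : Integrable p μ := by
    by_contra h; rw [integral_undef h] at hp1; norm_num at hp1
  have hqint : Integrable q μ := by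
    by_contra h; rw [integral_undef h] at hq1; norm_num at hq1
  obtain ⟨c, hc⟩ := exists_subgradient_aux hf (show (0:ℝ) < 1/lam by positivity)
  set K : ℝ := lam * f (1/lam) - c with hK
  have key : ∀ᵐ x ∂μ,
      (lam * p x + (1 - lam) * pbar x) * f (p x / (lam * p x + (1 - lam) * pbar x))
        + (q x - p x) * K
      ≤ (lam * q x + (1 - lam) * pbar x) * f (p x / (lam * q x + (1 - lam) * pbar x)) := by
    filter_upwards [hdisj, habs] with x hd ha
    rcases eq_or_lt_of_le (hp0 x) with hp | hp
    · -- p x = 0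
      have hp' : p x = 0 := hp.symm
      have h0 : f (1/lam) + c * (0 - 1/lam) ≤ f 0 := hc 0 (Set.mem_Ici.mpr le_rfl)
      rw [hp', zero_div, zero_div]
      have hq' : 0 ≤ q x := hq0 x
      have heq : lam * q x * (f (1/lam) + c * (0 - 1/lam)) = q x * K := by
        rw [hK]; field_simp; ring
      have hle : q x * K ≤ lam * q x * f 0 := by
        rw [← heq]
        exact mul_le_mul_of_nonneg_left h0 (mul_nonneg hL0.le hq')
      nlinarith [hle]
    · -- p x > 0
      have hpb : pbar x = 0 := by
        rcases mul_eq_zero.mp hd with h | h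
        · exact absurd h (ne_of_gt hp)
        · exact h
      have hq' : 0 < q x := by
        rcases eq_or_lt_of_le (hq0 x) with h | h
        · exact absurd (ha h.symm) (ne_of_gt hp)
        · exact h
      rw [hpb]
      have e1 : lam * p x + (1 - lam) * 0 = lam * p x := by ring
      have e2 : lam * q x + (1 - lam) * 0 = lam * q x := by ring
      rw [e1, e2]
      have hdiv1 : p x / (lam * p x) = 1 / lam := by
        rw [mul_comm, ← div_div, div_self (ne_of_gt hp)]
      rw [hdiv1]
      have ht0 : p x / (lam * q x) ∈ Set.Ici (0:ℝ) := Set.mem_Ici.mpr (by positivity)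
      have hsub := hc _ ht0
      have hmul := mul_le_mul_of_nonneg_left hsub (mul_nonneg hL0.le hq'.le)
      have expand : lam * q x * (f (1/lam) + c * (p x / (lam * q x) - 1/lam))
          = lam * q x * f (1/lam) + c * (p x - q x) := by
        field_simp
      have goal_eq : lam * p x * f (1/lam) + (q x - p x) * K
          = lam * q x * f (1/lam) + c * (p x - q x) := by
        rw [hK]; ring
      linarith [hmul, expand, goal_eq]
  have hint3 : Integrable (fun x => (q x - p x) * K) μ := (hqint.sub hpint).mul_const K
  have hint2 : Integrable (fun x => (lam * p x + (1 - lam) * pbar x) *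
      f (p x / (lam * p x + (1 - lam) * pbar x)) + (q x - p x) * K) μ := hintp.add hint3
  have hmono := integral_mono_ae hint2 hintq key
  have hsum : ∫ x, ((lam * p x + (1 - lam) * pbar x) *
        f (p x / (lam * p x + (1 - lam) * pbar x)) + (q x - p x) * K) ∂μ
      = (∫ x, (lam * p x + (1 - lam) * pbar x) *
        f (p x / (lam * p x + (1 - lam) * pbar x)) ∂μ) + ∫ x, (q x - p x) * K ∂μ :=
    integral_add hintp hint3
  have hzero : ∫ x, (q x - p x) * K ∂μ = 0 := by
    rw [integral_mul_const, integral_sub hqint hpint, hq1, hp1]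
    ring
  rw [ge_iff_le]
  linarith [hmono, hsum, hzero]
end

section
/- Let μ be a σ-finite measure on a measurable space X, let p, p̄ : X → [0,∞) be measurable probability densities with respect to μ with p(x)·p̄(x) = 0 for μ-almost every x, let f : [0,∞) → ℝ be strictly convex with f(1) = 0 and f(0) finite, and let λ ∈ (0,1]. Then over all measurable probability densities q with respect to μ satisfying p(x) = 0 μ-a.e. on {q = 0} and for which the relevant integrands are μ-integrable, the functional q ↦ D_f(p ‖ λq + (1−λ)p̄) attains its minimum value λ f(1/λ) + (1−λ) f(0) at q = p, and every minimizer q satisfies q = p μ-almost everywhere. In particular, the minimizer of the NDA objective q ↦ D_f(p ‖ λq + (1−λ)p̄) coincides (up to μ-a.e. equality) with the minimizer of the original objective q ↦ D_f(p ‖ q), namely p itself. -/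
open MeasureTheory Set

/-!
Let `c` be the slope of a supporting line of `f` at `1/λ`. Pointwise, the integrand of
`D_f(p ‖ λq + (1-λ)p̄)` dominates `c p + (λ f(1/λ) - c) q + (1-λ) f(0) p̄`: on `{p > 0}` we have
`p̄ = 0` and this is the supporting line inequality, while on `{p = 0}` it reduces to
`λ f(1/λ) - c < λ f(0)`, the supporting line inequality at `0`. By strict convexity the bound is
strict wherever `q ≠ p`. The minorant integrates to `λ f(1/λ) + (1-λ) f(0)` whatever the density
`q`, which gives the lower bound and forces `q = p` a.e. for a minimizer. The case `λ = 1` is the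
nonnegativity of `D_f(p ‖ q)`.
-/

lemma StrictConvexOn.add_rightDeriv_mul_sub_lt {S : Set ℝ} {f : ℝ → ℝ}
    (hf : StrictConvexOn ℝ S f) {x y : ℝ} (hx : x ∈ interior S) (hy : y ∈ S) (hyx : y ≠ x) :
    f x + derivWithin f (Ioi x) x * (y - x) < f y := by
  rcases hyx.lt_or_gt with hlt | hgt
  · have h := (hf.slope_lt_leftDeriv hy (interior_subset hx) hlt
      (hf.convexOn.differentiableWithinAt_Iio_of_mem_interior hx)).trans_le
      (hf.convexOn.leftDeriv_le_rightDeriv_of_mem_interior hx)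
    rw [slope_def_field, div_lt_iff₀ (sub_pos.2 hlt)] at h
    linarith
  · have h := hf.rightDeriv_lt_slope (interior_subset hx) hy hgt
      (hf.convexOn.differentiableWithinAt_Ioi_of_mem_interior hx)
    rw [slope_def_field, lt_div_iff₀ (sub_pos.2 hgt)] at h
    linarith

/-- The integrand of `D_f(u ‖ r)`; at `r = 0` it is `0` since `u / 0 = 0`, matching the convention
for `D_f`. -/
noncomputable def perspective (f : ℝ → ℝ) (r u : ℝ) : ℝ := r * f (u / r)

section Pointwise

variable {f : ℝ → ℝ} {lam c p q pbar : ℝ}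

lemma nda_perspective_self (h : p * pbar = 0) :
    perspective f (lam * p + (1 - lam) * pbar) p
      = lam * f (1 / lam) * p + (1 - lam) * f 0 * pbar := by
  rcases mul_eq_zero.1 h with rfl | rfl
  · simp only [perspective, mul_zero, zero_add, zero_div]
    ring
  · rcases eq_or_ne p 0 with rfl | hp
    · simp [perspective]
    · simp only [perspective, mul_zero, add_zero, div_mul_cancel_right₀ hp, one_div]
      ring

lemma nda_minorant_lt_perspective
    (hc : ∀ t, 0 ≤ t → t ≠ 1 / lam → f (1 / lam) + c * (t - 1 / lam) < f t) (hlam : 0 < lam)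
    (hp : 0 ≤ p) (hq : 0 ≤ q) (hdisj : p * pbar = 0) (habs : q = 0 → p = 0)
    (hqp : q ≠ p) :
    c * p + (lam * f (1 / lam) - c) * q + (1 - lam) * f 0 * pbar
      < perspective f (lam * q + (1 - lam) * pbar) p := by
  rcases hp.eq_or_lt with rfl | hp
  · have hq : 0 < q := hq.lt_of_ne (Ne.symm hqp)
    have h0 := mul_lt_mul_of_pos_left (hc 0 le_rfl (one_div_pos.2 hlam).ne) hlam
    have hslope : lam * f (1 / lam) - c < lam * f 0 := by
      field_simp at h0
      linarith
    simp only [perspective, zero_div]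
    linarith [mul_lt_mul_of_pos_right hslope hq]
  · have hq : 0 < q := hq.lt_of_ne fun h => hp.ne' (habs h.symm)
    obtain rfl : pbar = 0 := (mul_eq_zero.1 hdisj).resolve_left hp.ne'
    have hlq : 0 < lam * q := mul_pos hlam hq
    have hne : p / (lam * q) ≠ 1 / lam := by
      rw [Ne, div_eq_div_iff hlq.ne' hlam.ne']
      intro h
      exact hqp (mul_left_cancel₀ hlam.ne' (by linarith)).symm
    have ht := mul_lt_mul_of_pos_left (hc _ (by positivity) hne) hlq
    simp only [perspective, mul_zero, add_zero]
    field_simp at ht ⊢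
    linarith

lemma nda_minorant_le_perspective
    (hc : ∀ t, 0 ≤ t → t ≠ 1 / lam → f (1 / lam) + c * (t - 1 / lam) < f t) (hlam : 0 < lam)
    (hp : 0 ≤ p) (hq : 0 ≤ q) (hdisj : p * pbar = 0) (habs : q = 0 → p = 0) :
    c * p + (lam * f (1 / lam) - c) * q + (1 - lam) * f 0 * pbar
      ≤ perspective f (lam * q + (1 - lam) * pbar) p := by
  rcases eq_or_ne q p with rfl | hqp
  · rw [nda_perspective_self hdisj]
    linarith
  · exact (nda_minorant_lt_perspective hc hlam hp hq hdisj habs hqp).le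

end Pointwise

section Integral

variable {X : Type*} [MeasurableSpace X] {μ : Measure X} {f : ℝ → ℝ} {lam : ℝ}
  {p q pbar : X → ℝ}

lemma integral_nda_minorant (c : ℝ) (hp1 : ∫ x, p x ∂μ = 1) (hq1 : ∫ x, q x ∂μ = 1)
    (hpbar1 : ∫ x, pbar x ∂μ = 1) :
    ∫ x, (c * p x + (lam * f (1 / lam) - c) * q x + (1 - lam) * f 0 * pbar x) ∂μ
      = lam * f (1 / lam) + (1 - lam) * f 0 := by
  have hp := Integrable.of_integral_ne_zero (hp1 ▸ one_ne_zero)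
  have hq := Integrable.of_integral_ne_zero (hq1 ▸ one_ne_zero)
  have hpq : Integrable (fun x => c * p x + (lam * f (1 / lam) - c) * q x) μ :=
    (hp.const_mul c).add (hq.const_mul _)
  rw [integral_add hpq ((Integrable.of_integral_ne_zero (hpbar1 ▸ one_ne_zero)).const_mul _),
    integral_add (hp.const_mul _) (hq.const_mul _), integral_const_mul, integral_const_mul,
    integral_const_mul, hp1, hq1, hpbar1]
  ring

lemma nda_objective_self (hp1 : ∫ x, p x ∂μ = 1) (hpbar1 : ∫ x, pbar x ∂μ = 1)
    (hdisj : ∀ᵐ x ∂μ, p x * pbar x = 0) :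
    ∫ x, perspective f (lam * p x + (1 - lam) * pbar x) (p x) ∂μ
      = lam * f (1 / lam) + (1 - lam) * f 0 := by
  rw [← integral_nda_minorant 0 hp1 hp1 hpbar1]
  refine integral_congr_ae (hdisj.mono fun x hx => ?_)
  exact (nda_perspective_self hx).trans (by ring)

lemma exists_nda_minorant (hf : StrictConvexOn ℝ (Ici 0) f) (hlam : 0 < lam)
    (hp0 : ∀ x, 0 ≤ p x) (hp1 : ∫ x, p x ∂μ = 1) (hpbar1 : ∫ x, pbar x ∂μ = 1)
    (hdisj : ∀ᵐ x ∂μ, p x * pbar x = 0) (hq0 : ∀ x, 0 ≤ q x) (hq1 : ∫ x, q x ∂μ = 1)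
    (habs : ∀ᵐ x ∂μ, q x = 0 → p x = 0) :
    ∃ L : X → ℝ, Integrable L μ ∧ ∫ x, L x ∂μ = lam * f (1 / lam) + (1 - lam) * f 0 ∧
      ∀ᵐ x ∂μ, L x ≤ perspective f (lam * q x + (1 - lam) * pbar x) (p x) ∧
        (L x = perspective f (lam * q x + (1 - lam) * pbar x) (p x) → q x = p x) := by
  set c := derivWithin f (Ioi (1 / lam)) (1 / lam)
  have hc : ∀ t, 0 ≤ t → t ≠ 1 / lam → f (1 / lam) + c * (t - 1 / lam) < f t := fun t ht =>
    hf.add_rightDeriv_mul_sub_lt (by rw [interior_Ici]; exact one_div_pos.2 hlam) ht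
  have hp := Integrable.of_integral_ne_zero (hp1 ▸ one_ne_zero)
  have hq := Integrable.of_integral_ne_zero (hq1 ▸ one_ne_zero)
  have hpbar := Integrable.of_integral_ne_zero (hpbar1 ▸ one_ne_zero)
  refine ⟨_, ((hp.const_mul c).add (hq.const_mul _)).add (hpbar.const_mul _),
    integral_nda_minorant c hp1 hq1 hpbar1, ?_⟩
  filter_upwards [hdisj, habs] with x hx hxq
  refine ⟨nda_minorant_le_perspective hc hlam (hp0 x) (hq0 x) hx hxq, fun heq => ?_⟩
  by_contra hqp
  exact (nda_minorant_lt_perspective hc hlam (hp0 x) (hq0 x) hx hxq hqp).ne heq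

lemma nda_objective_ge (hf : StrictConvexOn ℝ (Ici 0) f) (hlam : 0 < lam)
    (hp0 : ∀ x, 0 ≤ p x) (hp1 : ∫ x, p x ∂μ = 1) (hpbar1 : ∫ x, pbar x ∂μ = 1)
    (hdisj : ∀ᵐ x ∂μ, p x * pbar x = 0) (hq0 : ∀ x, 0 ≤ q x) (hq1 : ∫ x, q x ∂μ = 1)
    (habs : ∀ᵐ x ∂μ, q x = 0 → p x = 0)
    (hint : Integrable (fun x => perspective f (lam * q x + (1 - lam) * pbar x) (p x)) μ) :
    lam * f (1 / lam) + (1 - lam) * f 0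
      ≤ ∫ x, perspective f (lam * q x + (1 - lam) * pbar x) (p x) ∂μ := by
  obtain ⟨L, hL, hL1, hLG⟩ := exists_nda_minorant hf hlam hp0 hp1 hpbar1 hdisj hq0 hq1 habs
  exact hL1 ▸ integral_mono_ae hL hint (hLG.mono fun _ hx => hx.1)

lemma ae_eq_of_nda_objective_eq (hf : StrictConvexOn ℝ (Ici 0) f) (hlam : 0 < lam)
    (hp0 : ∀ x, 0 ≤ p x) (hp1 : ∫ x, p x ∂μ = 1) (hpbar1 : ∫ x, pbar x ∂μ = 1)
    (hdisj : ∀ᵐ x ∂μ, p x * pbar x = 0) (hq0 : ∀ x, 0 ≤ q x) (hq1 : ∫ x, q x ∂μ = 1)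
    (habs : ∀ᵐ x ∂μ, q x = 0 → p x = 0)
    (hint : Integrable (fun x => perspective f (lam * q x + (1 - lam) * pbar x) (p x)) μ)
    (heq : ∫ x, perspective f (lam * q x + (1 - lam) * pbar x) (p x) ∂μ
      = lam * f (1 / lam) + (1 - lam) * f 0) :
    q =ᵐ[μ] p := by
  obtain ⟨L, hL, hL1, hLG⟩ := exists_nda_minorant hf hlam hp0 hp1 hpbar1 hdisj hq0 hq1 habs
  have hLG_eq :=
    (integral_eq_iff_of_ae_le hL hint (hLG.mono fun _ hx => hx.1)).1 (hL1.trans heq.symm)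
  filter_upwards [hLG, hLG_eq] with x hx hxeq
  exact hx.2 hxeq

end Integral

theorem stmt_6_general {X : Type*} [MeasurableSpace X] (μ : Measure X)
    (p pbar : X → ℝ)
    (hp0 : ∀ x, 0 ≤ p x)
    (hp1 : ∫ x, p x ∂μ = 1) (hpbar1 : ∫ x, pbar x ∂μ = 1)
    (hdisj : ∀ᵐ x ∂μ, p x * pbar x = 0)
    (f : ℝ → ℝ) (hf : StrictConvexOn ℝ (Set.Ici 0) f) (hf1 : f 1 = 0)
    (lam : ℝ) (hlam : lam ∈ Set.Ioc (0 : ℝ) 1) :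
    -- (1) the NDA objective takes the value `λ f(1/λ) + (1-λ) f 0` at `q = p`:
    (∫ x, (lam * p x + (1 - lam) * pbar x) *
        f (p x / (lam * p x + (1 - lam) * pbar x)) ∂μ
      = lam * f (1 / lam) + (1 - lam) * f 0)
    ∧
    -- (2) this value is the minimum over all admissible densities `q`:
    (∀ q : X → ℝ, Measurable q → (∀ x, 0 ≤ q x) → (∫ x, q x ∂μ = 1) →
      (∀ᵐ x ∂μ, q x = 0 → p x = 0) →
      Integrable (fun x =>
        (lam * q x + (1 - lam) * pbar x) * f (p x / (lam * q x + (1 - lam) * pbar x))) μ →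
      lam * f (1 / lam) + (1 - lam) * f 0
        ≤ ∫ x, (lam * q x + (1 - lam) * pbar x) *
            f (p x / (lam * q x + (1 - lam) * pbar x)) ∂μ)
    ∧
    -- (3) every minimizer `q` equals `p` μ-a.e.:
    (∀ q : X → ℝ, Measurable q → (∀ x, 0 ≤ q x) → (∫ x, q x ∂μ = 1) →
      (∀ᵐ x ∂μ, q x = 0 → p x = 0) →
      Integrable (fun x =>
        (lam * q x + (1 - lam) * pbar x) * f (p x / (lam * q x + (1 - lam) * pbar x))) μ →
      (∫ x, (lam * q x + (1 - lam) * pbar x) *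
          f (p x / (lam * q x + (1 - lam) * pbar x)) ∂μ
        = lam * f (1 / lam) + (1 - lam) * f 0) →
      ∀ᵐ x ∂μ, q x = p x)
    ∧
    -- (4) `p` is likewise the minimizer of the original objective `q ↦ D_f(p ‖ q)`:
    ((∫ x, p x * f (p x / p x) ∂μ = 0)
      ∧ ∀ q : X → ℝ, Measurable q → (∀ x, 0 ≤ q x) → (∫ x, q x ∂μ = 1) →
          (∀ᵐ x ∂μ, q x = 0 → p x = 0) →
          Integrable (fun x => q x * f (p x / q x)) μ →
          0 ≤ ∫ x, q x * f (p x / q x) ∂μ) := by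
  have hlam0 : 0 < lam := hlam.1
  refine ⟨nda_objective_self hp1 hpbar1 hdisj,
    fun q _ hq0 hq1 habs hint => nda_objective_ge hf hlam0 hp0 hp1 hpbar1 hdisj hq0 hq1 habs hint,
    fun q _ hq0 hq1 habs hint heq =>
      ae_eq_of_nda_objective_eq hf hlam0 hp0 hp1 hpbar1 hdisj hq0 hq1 habs hint heq, ?_, ?_⟩
  · have hself : ∀ x, p x * f (p x / p x) = 0 := fun x => by
      rcases eq_or_ne (p x) 0 with h | h
      · simp [h]
      · simp [div_self h, hf1]
    simp only [hself, integral_zero]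
  · intro q _ hq0 hq1 habs hint
    have h := nda_objective_ge (lam := 1) hf one_pos hp0 hp1 hpbar1 hdisj hq0 hq1 habs
      (by simpa only [perspective, one_mul, sub_self, zero_mul, add_zero] using hint)
    simpa only [perspective, one_mul, sub_self, zero_mul, add_zero, div_one, hf1] using h

/-- generator-side of the paper's Theorem 1.  Fix probability densities
`p, pbar` w.r.t. a σ-finite measure `μ` with disjoint supports, a strictly convex
`f : [0,∞) → ℝ` with `f 1 = 0`, and `λ ∈ (0,1]`.  Over all probability densities `q` with
`p ≪ q` and with the relevant integrands integrable, the NDA objective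
`q ↦ D_f(p ‖ λq + (1-λ)pbar)`:
(1) takes the value `λ f(1/λ) + (1-λ) f 0` at `q = p`,
(2) is everywhere `≥ λ f(1/λ) + (1-λ) f 0` (so it attains its minimum at `q = p`),
(3) any minimizer i.e. any `q` attaining this value equals `p` μ-a.e.;
and, in particular, this minimizer coincides with the minimizer of the original objective
`q ↦ D_f(p ‖ q)`, namely `p` itself:
(4) `D_f(p ‖ p) = 0` and `D_f(p ‖ q) ≥ 0` for every admissible `q`.
(In Lean, division by zero yields `0`, so all the integrands are automatically `0`
whenever the corresponding density vanishes.) -/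
theorem stmt_6 {X : Type*} [MeasurableSpace X] (μ : Measure X) [SigmaFinite μ]
    (p pbar : X → ℝ)
    (hpm : Measurable p) (hpbarm : Measurable pbar)
    (hp0 : ∀ x, 0 ≤ p x) (hpbar0 : ∀ x, 0 ≤ pbar x)
    (hp1 : ∫ x, p x ∂μ = 1) (hpbar1 : ∫ x, pbar x ∂μ = 1)
    (hdisj : ∀ᵐ x ∂μ, p x * pbar x = 0)
    (f : ℝ → ℝ) (hf : StrictConvexOn ℝ (Set.Ici 0) f) (hf1 : f 1 = 0)
    (lam : ℝ) (hlam : lam ∈ Set.Ioc (0 : ℝ) 1) :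
    -- (1) the NDA objective takes the value `λ f(1/λ) + (1-λ) f 0` at `q = p`:
    (∫ x, (lam * p x + (1 - lam) * pbar x) *
        f (p x / (lam * p x + (1 - lam) * pbar x)) ∂μ
      = lam * f (1 / lam) + (1 - lam) * f 0)
    ∧
    -- (2) this value is the minimum over all admissible densities `q`:
    (∀ q : X → ℝ, Measurable q → (∀ x, 0 ≤ q x) → (∫ x, q x ∂μ = 1) →
      (∀ᵐ x ∂μ, q x = 0 → p x = 0) →
      Integrable (fun x =>
        (lam * q x + (1 - lam) * pbar x) * f (p x / (lam * q x + (1 - lam) * pbar x))) μ →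
      lam * f (1 / lam) + (1 - lam) * f 0
        ≤ ∫ x, (lam * q x + (1 - lam) * pbar x) *
            f (p x / (lam * q x + (1 - lam) * pbar x)) ∂μ)
    ∧
    -- (3) every minimizer `q` equals `p` μ-a.e.:
    (∀ q : X → ℝ, Measurable q → (∀ x, 0 ≤ q x) → (∫ x, q x ∂μ = 1) →
      (∀ᵐ x ∂μ, q x = 0 → p x = 0) →
      Integrable (fun x =>
        (lam * q x + (1 - lam) * pbar x) * f (p x / (lam * q x + (1 - lam) * pbar x))) μ →
      (∫ x, (lam * q x + (1 - lam) * pbar x) *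
          f (p x / (lam * q x + (1 - lam) * pbar x)) ∂μ
        = lam * f (1 / lam) + (1 - lam) * f 0) →
      ∀ᵐ x ∂μ, q x = p x)
    ∧
    -- (4) `p` is likewise the minimizer of the original objective `q ↦ D_f(p ‖ q)`:
    ((∫ x, p x * f (p x / p x) ∂μ = 0)
      ∧ ∀ q : X → ℝ, Measurable q → (∀ x, 0 ≤ q x) → (∫ x, q x ∂μ = 1) →
          (∀ᵐ x ∂μ, q x = 0 → p x = 0) →
          Integrable (fun x => q x * f (p x / q x)) μ →
          0 ≤ ∫ x, q x * f (p x / q x) ∂μ) :=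
  stmt_6_general μ p pbar hp0 hp1 hpbar1 hdisj f hf hf1 lam hlam
end

section
/- Let μ be a σ-finite measure on a measurable space X, let p, r : X → [0,∞) be measurable probability densities with respect to μ such that p(x) = 0 for μ-almost every x with r(x) = 0. Let f : [0,∞) → ℝ be convex and lower semi-continuous, and define its convex conjugate f*(t) = sup_{u ≥ 0} (u·t − f(u)) for t ∈ ℝ. Then for every measurable function D : X → ℝ such that x ↦ p(x) D(x) and x ↦ r(x) f*(D(x)) are μ-integrable, and assuming x ↦ r(x) f(p(x)/r(x)) is μ-integrable (with the convention that the integrand equals 0 whenever r(x) = 0), one has ∫ p(x) D(x) dμ(x) − ∫ r(x) f*(D(x)) dμ(x) ≤ ∫ r(x) f(p(x)/r(x)) dμ(x). -/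
open MeasureTheory

/-- The convex conjugate of `f : [0,∞) → ℝ`, namely `f*(t) = sup_{u ≥ 0} (u·t − f(u))`,
valued in the extended reals (it may be `+∞`). -/
noncomputable def starConj (f : ℝ → ℝ) (t : ℝ) : EReal :=
  ⨆ u : {u : ℝ // 0 ≤ u}, ((u.1 * t - f u.1 : ℝ) : EReal)

lemma starConj_ge (f : ℝ → ℝ) (t u : ℝ) (hu : 0 ≤ u) :
    ((u * t - f u : ℝ) : EReal) ≤ starConj f t :=
  le_iSup (fun v : {v : ℝ // 0 ≤ v} => ((v.1 * t - f v.1 : ℝ) : EReal)) ⟨u, hu⟩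

lemma starConj_toReal_ge (f : ℝ → ℝ) (t u : ℝ) (hu : 0 ≤ u)
    (hfin : starConj f t ≠ ⊤) : u * t - f u ≤ (starConj f t).toReal := by
  have h := starConj_ge f t u hu
  have hbot : starConj f t ≠ ⊥ := fun hb => by
    rw [hb, le_bot_iff] at h; exact EReal.coe_ne_bot _ h
  have := (EReal.coe_toReal hfin hbot)
  rw [← this] at h
  exact_mod_cast h

/-- f-GAN variational lower bound.  For probability densities `p, r`
w.r.t. a σ-finite measure `μ` with `p ≪ r`, a convex lower semi-continuous
`f : [0,∞) → ℝ` with conjugate `f*`, and any measurable discriminator `D : X → ℝ` such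
that `p·D` and `r·f*(D)` are integrable (in particular `f*(D x)` is finite wherever
`r x ≠ 0`), and such that the `f`-divergence integrand `r·f(p/r)` is integrable:
`∫ p D dμ − ∫ r f*(D) dμ ≤ ∫ r f(p/r) dμ = D_f(p ‖ r)`.
(In Lean, division by zero yields `0`, so the divergence integrand is automatically `0`
whenever `r x = 0`, as the convention requires; likewise the factor `r x = 0` kills the
junk value of `(starConj f (D x)).toReal` outside the a.e.-finiteness set.) -/
theorem stmt_7 {X : Type*} [MeasurableSpace X] (μ : Measure X) [SigmaFinite μ]
    (p r : X → ℝ)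
    (hpm : Measurable p) (hrm : Measurable r)
    (hp0 : ∀ x, 0 ≤ p x) (hr0 : ∀ x, 0 ≤ r x)
    (hp1 : ∫ x, p x ∂μ = 1) (hr1 : ∫ x, r x ∂μ = 1)
    (habs : ∀ᵐ x ∂μ, r x = 0 → p x = 0)
    (f : ℝ → ℝ) (hf : ConvexOn ℝ (Set.Ici 0) f)
    (hlsc : LowerSemicontinuousOn f (Set.Ici 0))
    (D : X → ℝ) (hD : Measurable D)
    (hfin : ∀ᵐ x ∂μ, r x ≠ 0 → starConj f (D x) ≠ ⊤)
    (h1 : Integrable (fun x => p x * D x) μ)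
    (h2 : Integrable (fun x => r x * (starConj f (D x)).toReal) μ)
    (h3 : Integrable (fun x => r x * f (p x / r x)) μ) :
    (∫ x, p x * D x ∂μ) - ∫ x, r x * (starConj f (D x)).toReal ∂μ
      ≤ ∫ x, r x * f (p x / r x) ∂μ := by
  rw [sub_le_iff_le_add, ← integral_add h3 h2]
  apply integral_mono_ae h1 (h3.add h2)
  filter_upwards [habs, hfin] with x habs hfin
  by_cases hr : r x = 0
  · simp [hr, habs hr]
  · have hrpos : 0 < r x := lt_of_le_of_ne (hr0 x) (Ne.symm hr)
    have hkey := starConj_toReal_ge f (D x) (p x / r x) (div_nonneg (hp0 x) (hr0 x)) (hfin hr)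
    have h5 := mul_le_mul_of_nonneg_left hkey (hr0 x)
    have hq : r x * (p x / r x * D x - f (p x / r x))
        = p x * D x - r x * f (p x / r x) := by field_simp
    rw [hq] at h5
    simp only [Pi.add_apply]
    linarith
end
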